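/- arXiv:math/0511183 — 2 statements merged into one kernel-verified Lean document; each statement's English description precedes it below -/
import Mathlib

section
/- Uniqueness via sublinearity (case ℓ > 0): Let ρ : ℝ^N → [0,∞) be continuous, f : (0,∞) → (0,∞) with u ↦ f(u)/u strictly decreasing, and ℓ > 0. If u, v are C² solutions of -Δu = ρ(x) f(u), -Δv = ρ(x) f(v) in ℝ^N with u, v > ℓ and u(x), v(x) → ℓ as |x| → ∞, and additionally ρ(x₀) > 0 at every candidate maximum point (e.g. ρ > 0 everywhere), then u = v. -/
open Filter Set Topology

/-- The Laplacian of a real-valued function on `ℝ^N`. -/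
noncomputable def laplacian {N : ℕ} (u : EuclideanSpace ℝ (Fin N) → ℝ)
    (x : EuclideanSpace ℝ (Fin N)) : ℝ :=
  ∑ i : Fin N, iteratedFDeriv ℝ 2 u x ![EuclideanSpace.single i 1, EuclideanSpace.single i 1]

/-- At a (local) maximum of a `C²` function on `ℝ`, the second derivative is nonpositive. -/
lemma second_deriv_nonpos_of_max {φ : ℝ → ℝ} (hφ : ContDiff ℝ 2 φ)
    (hmax : ∀ t, φ t ≤ φ 0) : deriv (deriv φ) 0 ≤ 0 := by
  by_contra hcon
  push_neg at hcon
  have hloc : IsLocalMax φ 0 := Filter.Eventually.of_forall hmax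
  have h0 : deriv φ 0 = 0 := hloc.deriv_eq_zero
  have hd1 : ContDiff ℝ 1 (deriv φ) := by
    have := (contDiff_succ_iff_deriv (n := 1)).mp (by exact_mod_cast hφ)
    exact this.2.2
  have hdd : HasDerivAt (deriv φ) (deriv (deriv φ) 0) 0 :=
    ((hd1.differentiable one_ne_zero) 0).hasDerivAt
  have hslope : Tendsto (slope (deriv φ) 0) (𝓝[≠] 0) (𝓝 (deriv (deriv φ) 0)) :=
    hasDerivAt_iff_tendsto_slope.mp hdd
  have hslope' : Tendsto (slope (deriv φ) 0) (𝓝[>] 0) (𝓝 (deriv (deriv φ) 0)) :=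
    hslope.mono_left (nhdsWithin_mono _ (fun t ht => ne_of_gt ht))
  have hevent : ∀ᶠ t in 𝓝[>] (0:ℝ), 0 < deriv φ t := by
    filter_upwards [hslope'.eventually (eventually_gt_nhds hcon),
      self_mem_nhdsWithin] with t hts ht
    have ht0 : (0:ℝ) < t := ht
    have : slope (deriv φ) 0 t = deriv φ t / t := by
      simp [slope_def_field, h0]
    rw [this] at hts
    have := mul_pos hts ht0
    rwa [div_mul_cancel₀ _ (ne_of_gt ht0)] at this
  obtain ⟨δ, hδ, hsub⟩ := mem_nhdsGT_iff_exists_Ioo_subset.mp hevent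
  have hδ0 : (0:ℝ) < δ := hδ
  have hmono : StrictMonoOn φ (Icc 0 δ) := by
    apply strictMonoOn_of_deriv_pos (convex_Icc 0 δ) (hφ.continuous.continuousOn)
    intro t ht
    rw [interior_Icc] at ht
    exact hsub ht
  have h1 : φ 0 < φ (δ/2) := by
    apply hmono (left_mem_Icc.mpr hδ0.le) ⟨by linarith, by linarith⟩ (by linarith)
  exact absurd (hmax (δ/2)) (not_le.mpr h1)

/-- Second derivative along a line equals the second Fréchet derivative applied twice. -/
lemma line_second_deriv {E : Type*} [NormedAddCommGroup E] [NormedSpace ℝ E]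
    {u : E → ℝ} (hu : ContDiff ℝ 2 u) (x e : E) :
    deriv (deriv (fun t : ℝ => u (x + t • e))) 0 = fderiv ℝ (fderiv ℝ u) x e e := by
  have hA : ∀ t : ℝ, HasDerivAt (fun s : ℝ => x + s • e) e t := by
    intro t
    simpa using ((hasDerivAt_id t).smul_const e).const_add x
  have hud : Differentiable ℝ u := hu.differentiable (by norm_num)
  have hd1 : ∀ t : ℝ, HasDerivAt (fun s : ℝ => u (x + s • e)) (fderiv ℝ u (x + t • e) e) t := by
    intro t
    exact (hud (x + t • e)).hasFDerivAt.comp_hasDerivAt t (hA t)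
  have hderiv : deriv (fun s : ℝ => u (x + s • e)) = fun t : ℝ => fderiv ℝ u (x + t • e) e :=
    funext fun t => (hd1 t).deriv
  have hfd' : ContDiff ℝ 1 (fderiv ℝ u) := hu.fderiv_right (by norm_num)
  have hfd : HasFDerivAt (fderiv ℝ u) (fderiv ℝ (fderiv ℝ u) x) (x + (0:ℝ) • e) := by
    simpa using ((hfd'.differentiable one_ne_zero) x).hasFDerivAt
  have hc : HasDerivAt (fun t : ℝ => fderiv ℝ u (x + t • e)) (fderiv ℝ (fderiv ℝ u) x e) 0 :=
    hfd.comp_hasDerivAt 0 (hA 0)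
  have happ : HasDerivAt (fun t : ℝ => fderiv ℝ u (x + t • e) e)
      (fderiv ℝ (fderiv ℝ u) x e e) 0 := by
    simpa using hc.clm_apply (hasDerivAt_const (0:ℝ) e)
  rw [hderiv]
  exact happ.deriv

/-- The Laplacian is nonpositive at a global maximum. -/
lemma laplacian_nonpos_of_max {N : ℕ} {w : EuclideanSpace ℝ (Fin N) → ℝ}
    (hw : ContDiff ℝ 2 w) {x₀ : EuclideanSpace ℝ (Fin N)}
    (hmax : ∀ y, w y ≤ w x₀) : laplacian w x₀ ≤ 0 := by
  apply Finset.sum_nonpos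
  intro i _
  set e := EuclideanSpace.single i (1:ℝ) with he
  have h2 : iteratedFDeriv ℝ 2 w x₀ ![e, e] = fderiv ℝ (fderiv ℝ w) x₀ e e := by
    rw [iteratedFDeriv_two_apply]
    simp
  rw [h2, ← line_second_deriv hw x₀ e]
  have hφ : ContDiff ℝ 2 (fun t : ℝ => w (x₀ + t • e)) := by
    apply hw.comp
    exact contDiff_const.add (contDiff_id.smul contDiff_const)
  apply second_deriv_nonpos_of_max hφ
  intro t
  simpa using hmax (x₀ + t • e)

/-- One-sided comparison for the sublinear problem. -/
lemma le_of_sublinear (N : ℕ) (ℓ : ℝ) (hℓ : 0 < ℓ)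
    (ρ : EuclideanSpace ℝ (Fin N) → ℝ) (hρpos : ∀ x, 0 < ρ x)
    (f : ℝ → ℝ)
    (hdec : ∀ a b : ℝ, 0 < b → b < a → f a / a < f b / b)
    (u v : EuclideanSpace ℝ (Fin N) → ℝ)
    (huC2 : ContDiff ℝ 2 u) (hvC2 : ContDiff ℝ 2 v)
    (hueq : ∀ x, -laplacian u x = ρ x * f (u x))
    (hveq : ∀ x, -laplacian v x = ρ x * f (v x))
    (hugt : ∀ x, ℓ < u x) (hvgt : ∀ x, ℓ < v x)
    (hulim : Tendsto u (cocompact _) (nhds ℓ))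
    (hvlim : Tendsto v (cocompact _) (nhds ℓ)) :
    ∀ x, u x ≤ v x := by
  by_contra hcon
  push_neg at hcon
  obtain ⟨x₁, hx₁⟩ := hcon
  have hvpos : ∀ x, 0 < v x := fun x => hℓ.trans (hvgt x)
  have hupos : ∀ x, 0 < u x := fun x => hℓ.trans (hugt x)
  set h : EuclideanSpace ℝ (Fin N) → ℝ := fun x => u x / v x with hh
  have hcont : Continuous h := huC2.continuous.div hvC2.continuous fun x => (hvpos x).ne'
  have hlim : Tendsto h (cocompact _) (𝓝 1) := by
    have := hulim.div hvlim hℓ.ne'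
    exact (by simpa [div_self hℓ.ne'] using this : Tendsto (u / v) _ (𝓝 1))
  have hc1 : 1 < h x₁ := (one_lt_div (hvpos x₁)).mpr hx₁
  have hev : ∀ᶠ x in cocompact (EuclideanSpace ℝ (Fin N)), h x < h x₁ :=
    hlim.eventually_lt_const hc1
  obtain ⟨K, hKcomp, hKsub⟩ := mem_cocompact.mp hev
  set S : Set (EuclideanSpace ℝ (Fin N)) := {x | h x₁ ≤ h x} with hS
  have hSK : S ⊆ K := by
    intro x hx
    by_contra hxK
    have h1 : h x < h x₁ := hKsub hxK
    have h2 : h x₁ ≤ h x := hx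
    linarith
  have hSclosed : IsClosed S := isClosed_le continuous_const hcont
  have hScomp : IsCompact S := hKcomp.of_isClosed_subset hSclosed hSK
  have hSne : x₁ ∈ S := by show h x₁ ≤ h x₁; exact le_rfl
  obtain ⟨x₀, hx₀S, hx₀max⟩ := hScomp.exists_isMaxOn ⟨x₁, hSne⟩ hcont.continuousOn
  set σ : ℝ := h x₀ with hσdef
  have hσ : 1 < σ := lt_of_lt_of_le hc1 hx₀S
  have hglobal : ∀ y, h y ≤ σ := by
    intro y
    by_cases hy : y ∈ S
    · exact hx₀max hy
    · have : h y < h x₁ := lt_of_not_ge hy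
      exact le_of_lt (this.trans_le hx₀S)
  have huv : ∀ y, u y ≤ σ * v y := by
    intro y
    have := hglobal y
    rw [hh, div_le_iff₀ (hvpos y)] at this
    linarith [this]
  have hux₀ : u x₀ = σ * v x₀ := by
    rw [hσdef]
    exact (div_mul_cancel₀ _ (hvpos x₀).ne').symm
  set w : EuclideanSpace ℝ (Fin N) → ℝ := fun y => u y + (-σ) • v y with hw
  have hwC2 : ContDiff ℝ 2 w := huC2.add (hvC2.const_smul (-σ))
  have hwmax : ∀ y, w y ≤ w x₀ := by
    intro y
    have h1 : w y = u y - σ * v y := by simp only [hw, smul_eq_mul, neg_mul]; ring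
    have h2 : w x₀ = 0 := by simp only [hw, smul_eq_mul, neg_mul, hux₀]; ring
    rw [h1, h2]
    linarith [huv y]
  have hlap : laplacian w x₀ ≤ 0 := laplacian_nonpos_of_max hwC2 hwmax
  have hlapeq : laplacian w x₀ = laplacian u x₀ - σ * laplacian v x₀ := by
    unfold laplacian
    rw [Finset.mul_sum, ← Finset.sum_sub_distrib]
    apply Finset.sum_congr rfl
    intro i _
    have : w = u + (-σ) • v := by
      funext y; simp [hw]
    have hg : ContDiff ℝ 2 ((-σ) • v) := hvC2.const_smul (-σ)
    rw [this, iteratedFDeriv_add_apply huC2.contDiffAt hg.contDiffAt,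
      iteratedFDeriv_const_smul_apply hvC2.contDiffAt]
    simp only [ContinuousMultilinearMap.add_apply, ContinuousMultilinearMap.smul_apply,
      smul_eq_mul]
    ring
  have hu0 := hueq x₀
  have hv0 := hveq x₀
  have hkey : σ * (ρ x₀ * f (v x₀)) ≤ ρ x₀ * f (u x₀) := by
    rw [hlapeq] at hlap
    nlinarith [hlap, hu0, hv0]
  have hkey2 : σ * f (v x₀) ≤ f (u x₀) := by
    have hρ := hρpos x₀
    nlinarith [hkey]
  have hlt : u x₀ > v x₀ := by
    rw [hux₀]
    nlinarith [hvpos x₀]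
  have hdec' := hdec (u x₀) (v x₀) (hvpos x₀) hlt
  rw [div_lt_div_iff₀ (hupos x₀) (hvpos x₀)] at hdec'
  rw [hux₀] at hdec' hkey2
  nlinarith [hdec', hkey2, hvpos x₀]

theorem stmt11 (N : ℕ) (hN : 3 ≤ N) (ℓ : ℝ) (hℓ : 0 < ℓ)
    (ρ : EuclideanSpace ℝ (Fin N) → ℝ)
    (hρc : Continuous ρ) (hρpos : ∀ x, 0 < ρ x)
    (f : ℝ → ℝ) (hfc : ContinuousOn f (Set.Ioi 0))
    (hfpos : ∀ s > (0:ℝ), 0 < f s)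
    (hdec : ∀ a b : ℝ, 0 < b → b < a → f a / a < f b / b)
    (u v : EuclideanSpace ℝ (Fin N) → ℝ)
    (huC2 : ContDiff ℝ 2 u) (hvC2 : ContDiff ℝ 2 v)
    (hueq : ∀ x, -laplacian u x = ρ x * f (u x))
    (hveq : ∀ x, -laplacian v x = ρ x * f (v x))
    (hugt : ∀ x, ℓ < u x) (hvgt : ∀ x, ℓ < v x)
    (hulim : Tendsto u (cocompact _) (nhds ℓ))
    (hvlim : Tendsto v (cocompact _) (nhds ℓ)) :
    u = v := by
  funext x
  exact le_antisymm
    (le_of_sublinear N ℓ hℓ ρ hρpos f hdec u v huC2 hvC2 hueq hveq hugt hvgt hulim hvlim x)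
    (le_of_sublinear N ℓ hℓ ρ hρpos f hdec v u hvC2 huC2 hveq hueq hvgt hugt hvlim hulim x)
end

section
/- Let f : (0,∞) → (0,∞) with u ↦ f(u)/u decreasing, and suppose v is a C² positive function on an annular/ball region with Δv(x) < -f(v(x)) Φ(|x|) there, while u is C² with -Δu = ρ(x) f(u), ρ(x) ≤ Φ(|x|), on the ball B(0,k), and u ≤ v on ∂B(0,k) (u = ℓ on the boundary and v > ℓ). Then u ≤ v in B(0,k). (Comparison principle for the sublinear equation.) -/
open Filter Set Metric
open Topology

/-- 1-D second derivative test at a local max. -/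
lemma oneD_aux (φ : ℝ → ℝ) (D : ℝ)
    (hd : ∀ᶠ t in 𝓝 (0:ℝ), DifferentiableAt ℝ φ t)
    (hD : HasDerivAt (deriv φ) D 0) (hmax : IsLocalMax φ 0) : D ≤ 0 := by
  by_contra hD0
  push_neg at hD0
  have h0 : deriv φ 0 = 0 := hmax.deriv_eq_zero
  have hslope : Tendsto (slope (deriv φ) 0) (𝓝[≠] 0) (𝓝 D) :=
    hasDerivAt_iff_tendsto_slope.mp hD
  have hev : ∀ᶠ t in 𝓝[≠] (0:ℝ), 0 < slope (deriv φ) 0 t :=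
    hslope.eventually (eventually_gt_nhds hD0)
  have hev' : ∀ᶠ t in 𝓝[>] (0:ℝ), 0 < deriv φ t := by
    have := hev.filter_mono (nhdsWithin_mono 0 (by intro x hx; exact ne_of_gt hx))
    filter_upwards [this, self_mem_nhdsWithin] with t ht ht0
    have : slope (deriv φ) 0 t = deriv φ t / t := by
      simp [slope, h0, div_eq_inv_mul]
    rw [this] at ht
    exact (div_pos_iff.mp ht).resolve_right (fun h => absurd ht0 (not_lt.mpr h.2.le)) |>.1
  obtain ⟨δ₁, hδ₁, hsub⟩ := mem_nhdsGT_iff_exists_Ioc_subset.mp hev'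
  obtain ⟨ε, hε, hball⟩ := Metric.eventually_nhds_iff.mp (hd.and hmax)
  set δ := min δ₁ (ε/2) with hδdef
  have hδpos : 0 < δ := lt_min hδ₁ (by linarith)
  have hmem : ∀ t ∈ Icc (0:ℝ) δ, DifferentiableAt ℝ φ t ∧ φ t ≤ φ 0 := by
    intro t ht
    apply hball
    rw [Real.dist_eq, sub_zero]
    rw [abs_of_nonneg ht.1]
    calc t ≤ δ := ht.2
    _ ≤ ε/2 := min_le_right _ _
    _ < ε := by linarith
  have hmono : StrictMonoOn φ (Icc 0 δ) := by
    apply strictMonoOn_of_deriv_pos (convex_Icc 0 δ)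
    · exact fun x hx => ((hmem x hx).1).continuousAt.continuousWithinAt
    · intro x hx
      rw [interior_Icc] at hx
      exact hsub ⟨hx.1, hx.2.le.trans (min_le_left _ _)⟩
  have := hmono (left_mem_Icc.mpr hδpos.le) (right_mem_Icc.mpr hδpos.le) hδpos
  exact absurd this (not_lt.mpr (hmem δ (right_mem_Icc.mpr hδpos.le)).2)

/-- Directional second derivative test at an interior local max. -/
lemma dir2_aux {E : Type*} [NormedAddCommGroup E] [NormedSpace ℝ E]
    (g : E → ℝ) (s : Set E) (hs : IsOpen s) (hg : ContDiffOn ℝ 2 g s)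
    (z : E) (hz : z ∈ s) (hmax : IsLocalMax g z) (e : E) :
    fderiv ℝ (fderiv ℝ g) z e e ≤ 0 := by
  have hgd : DifferentiableOn ℝ g s := hg.differentiableOn (by norm_num)
  have hF : ContDiffOn ℝ 1 (fderiv ℝ g) s := hg.fderiv_of_isOpen hs (by norm_num)
  have hFd : DifferentiableOn ℝ (fderiv ℝ g) s := hF.differentiableOn one_ne_zero
  set L : ℝ → E := fun t => z + t • e with hL
  have hLc : Continuous L := by continuity
  have hL0 : L 0 = z := by simp [hL]
  have hLt : Tendsto L (𝓝 0) (𝓝 z) := hL0 ▸ hLc.tendsto 0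
  have hmemev : ∀ᶠ t in 𝓝 (0:ℝ), L t ∈ s := hLt.eventually (hs.mem_nhds hz)
  have hLd : ∀ t : ℝ, HasDerivAt L e t := by
    intro t
    have : HasDerivAt (fun t : ℝ => t • e) ((1:ℝ) • e) t := (hasDerivAt_id t).smul_const e
    simpa [hL] using this.const_add z
  set φ : ℝ → ℝ := fun t => g (L t) with hφ
  have hkey : ∀ t : ℝ, L t ∈ s → HasDerivAt φ (fderiv ℝ g (L t) e) t := by
    intro t ht
    exact ((hgd.differentiableAt (hs.mem_nhds ht)).hasFDerivAt).comp_hasDerivAt t (hLd t)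
  have hderiv_eq : ∀ᶠ t in 𝓝 (0:ℝ), deriv φ t = fderiv ℝ g (L t) e := by
    filter_upwards [hmemev] with t ht
    exact (hkey t ht).deriv
  have hψ : HasDerivAt (fun t => fderiv ℝ g (L t) e) (fderiv ℝ (fderiv ℝ g) z e e) 0 := by
    have h1 : HasDerivAt (fun t => fderiv ℝ g (L t)) (fderiv ℝ (fderiv ℝ g) z e) 0 := by
      have hz' : L 0 ∈ s := by rw [hL0]; exact hz
      have := ((hFd.differentiableAt (hs.mem_nhds hz')).hasFDerivAt).comp_hasDerivAt 0 (hLd 0)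
      simp only [hL0] at this; exact this
    have := h1.clm_apply (hasDerivAt_const 0 e)
    simpa [hL0] using this
  have hD : HasDerivAt (deriv φ) (fderiv ℝ (fderiv ℝ g) z e e) 0 :=
    hψ.congr_of_eventuallyEq hderiv_eq
  refine oneD_aux φ _ ?_ hD ?_
  · filter_upwards [hmemev] with t ht
    exact (hkey t ht).differentiableAt
  · have : ∀ᶠ t in 𝓝 (0:ℝ), g (L t) ≤ g z := hLt.eventually hmax
    simpa [IsLocalMax, IsMaxFilter, hφ, hL0] using this

lemma lap_eq_aux {N : ℕ} (g : EuclideanSpace ℝ (Fin N) → ℝ) (x : EuclideanSpace ℝ (Fin N)) :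
    laplacian g x = ∑ i : Fin N,
      fderiv ℝ (fderiv ℝ g) x (EuclideanSpace.single i 1) (EuclideanSpace.single i 1) := by
  unfold laplacian
  refine Finset.sum_congr rfl (fun i _ => ?_)
  rw [iteratedFDeriv_two_apply]
  simp

set_option maxHeartbeats 1000000 in
theorem stmt15 (N : ℕ) (hN : 1 ≤ N) (k : ℝ) (hk : 0 < k) (ℓ : ℝ) (hℓ : 0 ≤ ℓ)
    (f : ℝ → ℝ) (hfc : ContinuousOn f (Set.Ioi 0))
    (hfpos : ∀ a > (0:ℝ), 0 < f a)
    (hdec : ∀ a b : ℝ, 0 < b → b < a → f a / a < f b / b)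
    (Φ : ℝ → ℝ) (hΦc : ContinuousOn Φ (Set.Ici 0)) (hΦpos : ∀ r ≥ (0:ℝ), 0 ≤ Φ r)
    (ρ : EuclideanSpace ℝ (Fin N) → ℝ)
    (hρc : Continuous ρ) (hρpos : ∀ x, 0 ≤ ρ x) (hρΦ : ∀ x, ρ x ≤ Φ ‖x‖)
    (u v : EuclideanSpace ℝ (Fin N) → ℝ)
    (huc : ContinuousOn u (closedBall 0 k)) (hvc : ContinuousOn v (closedBall 0 k))
    (huC2 : ContDiffOn ℝ 2 u (ball 0 k)) (hvC2 : ContDiffOn ℝ 2 v (ball 0 k))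
    (hugt : ∀ x ∈ ball (0 : EuclideanSpace ℝ (Fin N)) k, ℓ < u x)
    (hubd : ∀ x ∈ sphere (0 : EuclideanSpace ℝ (Fin N)) k, u x = ℓ)
    (hvgt : ∀ x ∈ closedBall (0 : EuclideanSpace ℝ (Fin N)) k, ℓ < v x)
    (hueq : ∀ x ∈ ball (0 : EuclideanSpace ℝ (Fin N)) k, -laplacian u x = ρ x * f (u x))
    (hvineq : ∀ x ∈ ball (0 : EuclideanSpace ℝ (Fin N)) k,
      laplacian v x < -(f (v x) * Φ ‖x‖)) :
    ∀ x ∈ ball (0 : EuclideanSpace ℝ (Fin N)) k, u x ≤ v x := by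
  by_contra hcon
  push_neg at hcon
  obtain ⟨x0, hx0b, hx0⟩ := hcon
  have hball_sub : ball (0 : EuclideanSpace ℝ (Fin N)) k ⊆ closedBall 0 k :=
    ball_subset_closedBall
  have hvpos : ∀ x ∈ closedBall (0 : EuclideanSpace ℝ (Fin N)) k, 0 < v x :=
    fun x hx => lt_of_le_of_lt hℓ (hvgt x hx)
  set q : EuclideanSpace ℝ (Fin N) → ℝ := fun x => u x / v x with hq
  have hqc : ContinuousOn q (closedBall 0 k) :=
    huc.div hvc (fun x hx => (hvpos x hx).ne')
  obtain ⟨z, hzmem, hzmax⟩ :=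
    (isCompact_closedBall (0 : EuclideanSpace ℝ (Fin N)) k).exists_isMaxOn
      ⟨0, mem_closedBall_self hk.le⟩ hqc
  set c := q z with hc
  have hc1 : 1 < c := by
    have h1 : 1 < q x0 := (one_lt_div (hvpos x0 (hball_sub hx0b))).mpr hx0
    exact lt_of_lt_of_le h1 (hzmax (hball_sub hx0b))
  have hzball : z ∈ ball (0 : EuclideanSpace ℝ (Fin N)) k := by
    rcases lt_or_eq_of_le (mem_closedBall.mp hzmem) with h | h
    · exact mem_ball.mpr h
    · exfalso
      have hzs : z ∈ sphere (0 : EuclideanSpace ℝ (Fin N)) k := mem_sphere.mpr h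
      have huzℓ : u z = ℓ := hubd z hzs
      have : c < 1 := by
        rw [hc, hq]
        simp only [huzℓ]
        exact (div_lt_one (hvpos z hzmem)).mpr (hvgt z hzmem)
      linarith
  have hvz : 0 < v z := hvpos z hzmem
  have huz : u z = c * v z := by
    rw [hc, hq]
    field_simp
  have hle : ∀ x ∈ closedBall (0 : EuclideanSpace ℝ (Fin N)) k, u x ≤ c * v x := by
    intro x hx
    have h1 : q x ≤ c := hzmax hx
    have hv := hvpos x hx
    have : u x = q x * v x := by rw [hq]; field_simp
    rw [this]
    exact mul_le_mul_of_nonneg_right h1 hv.le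
  set w : EuclideanSpace ℝ (Fin N) → ℝ := fun x => u x - c * v x with hw
  have hmaxw : IsLocalMax w z := by
    have hnb : closedBall (0 : EuclideanSpace ℝ (Fin N)) k ∈ 𝓝 z :=
      mem_of_superset (isOpen_ball.mem_nhds hzball) hball_sub
    filter_upwards [hnb] with x hx
    have := hle x hx
    simp only [hw]
    rw [huz]
    linarith
  have hwC2 : ContDiffOn ℝ 2 w (ball 0 k) := huC2.sub (contDiffOn_const.mul hvC2)
  -- second derivative test at z
  have hlapw : laplacian w z ≤ 0 := by
    rw [lap_eq_aux]
    refine Finset.sum_nonpos (fun i _ => ?_)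
    exact dir2_aux w _ isOpen_ball hwC2 z hzball hmaxw _
  -- linearity of the Laplacian at z
  have hud : DifferentiableOn ℝ u (ball 0 k) := huC2.differentiableOn (by norm_num)
  have hvd : DifferentiableOn ℝ v (ball 0 k) := hvC2.differentiableOn (by norm_num)
  have hFu : ContDiffOn ℝ 1 (fderiv ℝ u) (ball 0 k) :=
    huC2.fderiv_of_isOpen isOpen_ball (by norm_num)
  have hFv : ContDiffOn ℝ 1 (fderiv ℝ v) (ball 0 k) :=
    hvC2.fderiv_of_isOpen isOpen_ball (by norm_num)
  have hFud : DifferentiableAt ℝ (fderiv ℝ u) z :=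
    (hFu.differentiableOn one_ne_zero).differentiableAt (isOpen_ball.mem_nhds hzball)
  have hFvd : DifferentiableAt ℝ (fderiv ℝ v) z :=
    (hFv.differentiableOn one_ne_zero).differentiableAt (isOpen_ball.mem_nhds hzball)
  have hfd_eq : (fun x => fderiv ℝ w x)
      =ᶠ[𝓝 z] (fun x => fderiv ℝ u x - c • fderiv ℝ v x) := by
    filter_upwards [isOpen_ball.mem_nhds hzball] with x hx
    have h1 : DifferentiableAt ℝ u x := hud.differentiableAt (isOpen_ball.mem_nhds hx)
    have h2 : DifferentiableAt ℝ v x := hvd.differentiableAt (isOpen_ball.mem_nhds hx)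
    have : w = fun x => u x - c * v x := rfl
    rw [this, fderiv_fun_sub h1 (h2.const_mul c), fderiv_const_mul h2 c]
  have hfd2 : fderiv ℝ (fderiv ℝ w) z
      = fderiv ℝ (fderiv ℝ u) z - c • fderiv ℝ (fderiv ℝ v) z := by
    rw [hfd_eq.fderiv_eq, fderiv_fun_sub (g := fun y => c • fderiv ℝ v y) hFud (hFvd.const_smul c), fderiv_fun_const_smul hFvd c]
  have hlin : laplacian w z = laplacian u z - c * laplacian v z := by
    rw [lap_eq_aux, lap_eq_aux, lap_eq_aux, Finset.mul_sum, ← Finset.sum_sub_distrib]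
    refine Finset.sum_congr rfl (fun i _ => ?_)
    rw [hfd2]
    simp
  -- the PDE inequalities at z
  have e1 : -laplacian u z = ρ z * f (u z) := hueq z hzball
  have e2 : laplacian v z < -(f (v z) * Φ ‖z‖) := hvineq z hzball
  have hfv : 0 < f (v z) := hfpos _ hvz
  have hΦz : 0 ≤ Φ ‖z‖ := hΦpos _ (norm_nonneg z)
  have hρz : 0 ≤ ρ z := hρpos z
  have hρΦz : ρ z ≤ Φ ‖z‖ := hρΦ z
  have huzgt : v z < u z := by rw [huz]; nlinarith
  have hd := hdec (u z) (v z) hvz huzgt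
  have huzpos : 0 < u z := hvz.trans huzgt
  have key1 : f (u z) < c * f (v z) := by
    have h' := (div_lt_div_iff₀ huzpos hvz).mp hd
    have h3 : f (v z) * u z = (c * f (v z)) * v z := by rw [huz]; ring
    exact (mul_lt_mul_iff_left₀ hvz).mp (h'.trans_eq h3)
  have key2 : c * (f (v z) * Φ ‖z‖) < ρ z * f (u z) := by
    have h3 := mul_lt_mul_of_pos_left e2 (by linarith : (0:ℝ) < c)
    have hA : c * -(f (v z) * Φ ‖z‖) = -(c * (f (v z) * Φ ‖z‖)) := by ring
    rw [hA] at h3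
    rw [hlin] at hlapw
    linarith
  have h4 : ρ z * f (u z) ≤ ρ z * (c * f (v z)) :=
    mul_le_mul_of_nonneg_left key1.le hρz
  have h5 : c * f (v z) * ρ z ≤ c * f (v z) * Φ ‖z‖ :=
    mul_le_mul_of_nonneg_left hρΦz (by positivity)
  have h6 : ρ z * (c * f (v z)) = c * f (v z) * ρ z := by ring
  have h7 : c * f (v z) * Φ ‖z‖ = c * (f (v z) * Φ ‖z‖) := by ring
  linarith
end
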